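/- Let U_F on ℂ²⊗H_F and U_R on ℂ²⊗H_R be linear maps with U_F(|0⟩|f⟩)=|0⟩|f₀⟩, U_F(|1⟩|f⟩)=|1⟩|f₃⟩, and (U_R⊗I_F)(|0⟩|r⟩|f_i⟩)=(γ|0⟩|r₀⟩+δ|1⟩|r₁⟩)|f_i⟩, (U_R⊗I_F)(|1⟩|r⟩|f_i⟩)=(δ|0⟩|r₂⟩+γ|1⟩|r₃⟩)|f_i⟩ with |γ|²+|δ|²=1. If the combined attack leaves the states |0⟩, |1⟩, and |+⟩ of the first register undisturbed (i.e., measurement of the first register in the appropriate basis always returns the original state), then δ = 0, |γ| = 1, |r₀⟩⊗|f₀⟩ = |r₃⟩⊗|f₃⟩, and consequently the joint probe state equals a fixed vector |R⟩⊗|F⟩ independent of the transmitted qubit state. -/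

import Mathlib

/-!
Testing the undisturbed condition for |0⟩ on the |1⟩-component of the state forces
`δ • (r₁ ⊗ f₀) = 0`, and `r₁ ⊗ f₀ ≠ 0`, so `δ = 0` and `|γ| = 1`. The attack then maps
`|0⟩|r⟩|f₀⟩ ↦ γ|0⟩ r₀ ⊗ f₀` and `|1⟩|r⟩|f₃⟩ ↦ γ|1⟩ r₃ ⊗ f₃`, and the output for |+⟩ is a product
`|+⟩ ⊗ w` only if both components equal `w`, i.e. `r₀ ⊗ f₀ = r₃ ⊗ f₃`.
-/

open scoped TensorProduct

noncomputable def ket0 : EuclideanSpace ℂ (Fin 2) := EuclideanSpace.single 0 1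
noncomputable def ket1 : EuclideanSpace ℂ (Fin 2) := EuclideanSpace.single 1 1
noncomputable def ketPlus : EuclideanSpace ℂ (Fin 2) :=
  (Real.sqrt 2 : ℂ)⁻¹ • (ket0 + ket1)

open TensorProduct

namespace TensorProduct

theorem tmul_ne_zero {K V W : Type*} [Field K] [AddCommGroup V] [Module K V]
    [AddCommGroup W] [Module K W] {x : V} {y : W} (hx : x ≠ 0) (hy : y ≠ 0) :
    x ⊗ₜ[K] y ≠ 0 := by
  obtain ⟨φ, hφ⟩ := Module.Projective.exists_dual_eq_one K hx
  obtain ⟨ψ, hψ⟩ := Module.Projective.exists_dual_eq_one K hy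
  intro h
  have := congrArg (LinearMap.mul' K K ∘ₗ map φ ψ) h
  simp [hφ, hψ] at this

end TensorProduct

section Qubit

variable {M : Type*} [AddCommGroup M] [Module ℂ M]

noncomputable def qubitCoeff (i : Fin 2) : EuclideanSpace ℂ (Fin 2) ⊗[ℂ] M →ₗ[ℂ] M :=
  (TensorProduct.lid ℂ M).toLinearMap ∘ₗ (EuclideanSpace.projₗ i).rTensor M

@[simp] lemma qubitCoeff_tmul (i : Fin 2) (a : EuclideanSpace ℂ (Fin 2)) (x : M) :
    qubitCoeff i (a ⊗ₜ[ℂ] x) = a i • x := by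
  simp [qubitCoeff]

@[simp] lemma ket0_apply_zero : ket0 0 = 1 := by simp [ket0]
@[simp] lemma ket0_apply_one : ket0 1 = 0 := by simp [ket0]
@[simp] lemma ket1_apply_zero : ket1 0 = 0 := by simp [ket1]
@[simp] lemma ket1_apply_one : ket1 1 = 1 := by simp [ket1]

theorem ket0_tmul_add_ket1_tmul_inj {a b a' b' : M} :
    ket0 ⊗ₜ[ℂ] a + ket1 ⊗ₜ[ℂ] b = ket0 ⊗ₜ[ℂ] a' + ket1 ⊗ₜ[ℂ] b' ↔ a = a' ∧ b = b' := by
  refine ⟨fun h ↦ ⟨?_, ?_⟩, fun ⟨ha, hb⟩ ↦ ha ▸ hb ▸ rfl⟩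
  · simpa using congrArg (qubitCoeff 0) h
  · simpa using congrArg (qubitCoeff 1) h

theorem ketPlus_tmul (w : M) :
    ketPlus ⊗ₜ[ℂ] w = (Real.sqrt 2 : ℂ)⁻¹ • (ket0 ⊗ₜ[ℂ] w + ket1 ⊗ₜ[ℂ] w) := by
  rw [ketPlus, ← smul_tmul', add_tmul]

theorem eq_of_smul_ket0_tmul_add_ket1_tmul_eq_ketPlus_tmul {a b w : M}
    (h : (Real.sqrt 2 : ℂ)⁻¹ • (ket0 ⊗ₜ[ℂ] a + ket1 ⊗ₜ[ℂ] b) = ketPlus ⊗ₜ[ℂ] w) :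
    a = w ∧ b = w := by
  have hsqrt : (Real.sqrt 2 : ℂ)⁻¹ ≠ 0 := by simp
  rw [ketPlus_tmul] at h
  exact ket0_tmul_add_ket1_tmul_inj.mp (smul_right_injective _ hsqrt h)

end Qubit

theorem combined_attack_probe_fixed_general
    {R F : Type*} [NormedAddCommGroup R] [InnerProductSpace ℂ R]
    [NormedAddCommGroup F] [InnerProductSpace ℂ F]
    (W : EuclideanSpace ℂ (Fin 2) ⊗[ℂ] (R ⊗[ℂ] F) →ₗ[ℂ]
         EuclideanSpace ℂ (Fin 2) ⊗[ℂ] (R ⊗[ℂ] F))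
    (γ δ : ℂ) (r r0 r1 r2 r3 : R) (f0 f3 : F)
    (hr1 : ‖r1‖ = 1)
    (hf0 : ‖f0‖ = 1)
    (hnorm : ‖γ‖ ^ 2 + ‖δ‖ ^ 2 = 1)
    -- action of U_R ⊗ I_F on the relevant vectors
    (hW0 : ∀ v : F, W (ket0 ⊗ₜ[ℂ] (r ⊗ₜ[ℂ] v)) =
      γ • (ket0 ⊗ₜ[ℂ] (r0 ⊗ₜ[ℂ] v)) + δ • (ket1 ⊗ₜ[ℂ] (r1 ⊗ₜ[ℂ] v)))
    (hW1 : ∀ v : F, W (ket1 ⊗ₜ[ℂ] (r ⊗ₜ[ℂ] v)) =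
      δ • (ket0 ⊗ₜ[ℂ] (r2 ⊗ₜ[ℂ] v)) + γ • (ket1 ⊗ₜ[ℂ] (r3 ⊗ₜ[ℂ] v)))
    -- undisturbed: after U_F (sending |0⟩f ↦ |0⟩f₀, |1⟩f ↦ |1⟩f₃) and then W,
    -- the first register is unchanged for the inputs |0⟩, |1⟩ and |+⟩
    (hund0 : ∃ w : R ⊗[ℂ] F, W (ket0 ⊗ₜ[ℂ] (r ⊗ₜ[ℂ] f0)) = ket0 ⊗ₜ[ℂ] w)
    (hundPlus : ∃ w : R ⊗[ℂ] F,
      (Real.sqrt 2 : ℂ)⁻¹ • (W (ket0 ⊗ₜ[ℂ] (r ⊗ₜ[ℂ] f0)) + W (ket1 ⊗ₜ[ℂ] (r ⊗ₜ[ℂ] f3)))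
        = ketPlus ⊗ₜ[ℂ] w) :
    δ = 0 ∧ ‖γ‖ = 1 ∧ r0 ⊗ₜ[ℂ] f0 = r3 ⊗ₜ[ℂ] f3 ∧
    ∃ RF : R ⊗[ℂ] F,
      W (ket0 ⊗ₜ[ℂ] (r ⊗ₜ[ℂ] f0)) = γ • (ket0 ⊗ₜ[ℂ] RF) ∧
      W (ket1 ⊗ₜ[ℂ] (r ⊗ₜ[ℂ] f3)) = γ • (ket1 ⊗ₜ[ℂ] RF) ∧
      (Real.sqrt 2 : ℂ)⁻¹ • (W (ket0 ⊗ₜ[ℂ] (r ⊗ₜ[ℂ] f0)) + W (ket1 ⊗ₜ[ℂ] (r ⊗ₜ[ℂ] f3)))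
        = γ • (ketPlus ⊗ₜ[ℂ] RF) := by
  obtain ⟨w0, hw0⟩ := hund0
  obtain ⟨w, hw⟩ := hundPlus
  have hδ : δ = 0 := by
    have h : ket0 ⊗ₜ[ℂ] (γ • r0 ⊗ₜ[ℂ] f0) + ket1 ⊗ₜ[ℂ] (δ • r1 ⊗ₜ[ℂ] f0) =
        ket0 ⊗ₜ[ℂ] w0 + ket1 ⊗ₜ[ℂ] 0 := by
      rw [tmul_smul, tmul_smul, tmul_zero, add_zero, ← hW0, hw0]
    refine (smul_eq_zero.mp (ket0_tmul_add_ket1_tmul_inj.mp h).2).resolve_right ?_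
    exact tmul_ne_zero (norm_ne_zero_iff.mp (by simp [hr1])) (norm_ne_zero_iff.mp (by simp [hf0]))
  have hγ : ‖γ‖ = 1 :=
    (pow_eq_one_iff_of_nonneg (norm_nonneg γ) two_ne_zero).mp (by simpa [hδ] using hnorm)
  have hγ0 : γ ≠ 0 := norm_ne_zero_iff.mp (hγ ▸ one_ne_zero)
  have hWket0 : W (ket0 ⊗ₜ[ℂ] (r ⊗ₜ[ℂ] f0)) = γ • (ket0 ⊗ₜ[ℂ] (r0 ⊗ₜ[ℂ] f0)) := by
    simp [hW0, hδ]
  have hWket1 : W (ket1 ⊗ₜ[ℂ] (r ⊗ₜ[ℂ] f3)) = γ • (ket1 ⊗ₜ[ℂ] (r3 ⊗ₜ[ℂ] f3)) := by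
    simp [hW1, hδ]
  have hprobe : r0 ⊗ₜ[ℂ] f0 = r3 ⊗ₜ[ℂ] f3 := by
    have h : (Real.sqrt 2 : ℂ)⁻¹ • (ket0 ⊗ₜ[ℂ] (γ • r0 ⊗ₜ[ℂ] f0) +
        ket1 ⊗ₜ[ℂ] (γ • r3 ⊗ₜ[ℂ] f3)) = ketPlus ⊗ₜ[ℂ] w := by
      rw [tmul_smul, tmul_smul, ← hWket0, ← hWket1, hw]
    obtain ⟨h0, h3⟩ := eq_of_smul_ket0_tmul_add_ket1_tmul_eq_ketPlus_tmul h
    exact hγ0.isUnit.smul_left_cancel.mp (h0.trans h3.symm)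
  refine ⟨hδ, hγ, hprobe, r0 ⊗ₜ[ℂ] f0, hWket0, by rw [hWket1, hprobe], ?_⟩
  rw [hWket0, hWket1, hprobe, ← smul_add, smul_comm, ketPlus_tmul]

/-- Combined two-stage attack `(U_F, U_R)`: `U_F` fixes the probe states `f₀, f₃`, and
`W = U_R ⊗ I_F` acts on the qubit together with the probes `R ⊗ F` as prescribed.  If the
qubit states |0⟩, |1⟩ and |+⟩ are all left undisturbed (the total state after the attack is
the original qubit state tensored with some probe state), then δ = 0, |γ| = 1,
`r₀⊗f₀ = r₃⊗f₃`, and the joint probe state is one fixed vector `RF` for all inputs. -/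
theorem combined_attack_probe_fixed
    {R F : Type*} [NormedAddCommGroup R] [InnerProductSpace ℂ R] [FiniteDimensional ℂ R]
    [NormedAddCommGroup F] [InnerProductSpace ℂ F] [FiniteDimensional ℂ F]
    (W : EuclideanSpace ℂ (Fin 2) ⊗[ℂ] (R ⊗[ℂ] F) →ₗ[ℂ]
         EuclideanSpace ℂ (Fin 2) ⊗[ℂ] (R ⊗[ℂ] F))
    (γ δ : ℂ) (r r0 r1 r2 r3 : R) (f f0 f3 : F)
    (hr : ‖r‖ = 1) (hr0 : ‖r0‖ = 1) (hr1 : ‖r1‖ = 1) (hr2 : ‖r2‖ = 1) (hr3 : ‖r3‖ = 1)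
    (hf : ‖f‖ = 1) (hf0 : ‖f0‖ = 1) (hf3 : ‖f3‖ = 1)
    (hnorm : ‖γ‖ ^ 2 + ‖δ‖ ^ 2 = 1)
    -- action of U_R ⊗ I_F on the relevant vectors
    (hW0 : ∀ v : F, W (ket0 ⊗ₜ[ℂ] (r ⊗ₜ[ℂ] v)) =
      γ • (ket0 ⊗ₜ[ℂ] (r0 ⊗ₜ[ℂ] v)) + δ • (ket1 ⊗ₜ[ℂ] (r1 ⊗ₜ[ℂ] v)))
    (hW1 : ∀ v : F, W (ket1 ⊗ₜ[ℂ] (r ⊗ₜ[ℂ] v)) =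
      δ • (ket0 ⊗ₜ[ℂ] (r2 ⊗ₜ[ℂ] v)) + γ • (ket1 ⊗ₜ[ℂ] (r3 ⊗ₜ[ℂ] v)))
    -- undisturbed: after U_F (sending |0⟩f ↦ |0⟩f₀, |1⟩f ↦ |1⟩f₃) and then W,
    -- the first register is unchanged for the inputs |0⟩, |1⟩ and |+⟩
    (hund0 : ∃ w : R ⊗[ℂ] F, W (ket0 ⊗ₜ[ℂ] (r ⊗ₜ[ℂ] f0)) = ket0 ⊗ₜ[ℂ] w)
    (hund1 : ∃ w : R ⊗[ℂ] F, W (ket1 ⊗ₜ[ℂ] (r ⊗ₜ[ℂ] f3)) = ket1 ⊗ₜ[ℂ] w)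
    (hundPlus : ∃ w : R ⊗[ℂ] F,
      (Real.sqrt 2 : ℂ)⁻¹ • (W (ket0 ⊗ₜ[ℂ] (r ⊗ₜ[ℂ] f0)) + W (ket1 ⊗ₜ[ℂ] (r ⊗ₜ[ℂ] f3)))
        = ketPlus ⊗ₜ[ℂ] w) :
    δ = 0 ∧ ‖γ‖ = 1 ∧ r0 ⊗ₜ[ℂ] f0 = r3 ⊗ₜ[ℂ] f3 ∧
    ∃ RF : R ⊗[ℂ] F,
      W (ket0 ⊗ₜ[ℂ] (r ⊗ₜ[ℂ] f0)) = γ • (ket0 ⊗ₜ[ℂ] RF) ∧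
      W (ket1 ⊗ₜ[ℂ] (r ⊗ₜ[ℂ] f3)) = γ • (ket1 ⊗ₜ[ℂ] RF) ∧
      (Real.sqrt 2 : ℂ)⁻¹ • (W (ket0 ⊗ₜ[ℂ] (r ⊗ₜ[ℂ] f0)) + W (ket1 ⊗ₜ[ℂ] (r ⊗ₜ[ℂ] f3)))
        = γ • (ketPlus ⊗ₜ[ℂ] RF) :=
  combined_attack_probe_fixed_general W γ δ r r0 r1 r2 r3 f0 f3 hr1 hf0 hnorm hW0 hW1 hund0 hundPlus
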